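/- Let τ be a nonnegative random variable on a probability space satisfying P[τ > t] ≤ 4·min(1, u·(2πt)^{−1/2})·min(1, v·(2πt)^{−1/2}) for all t > 0, where u, v > 0. Then for every p ∈ (1,2), E[τ^{p/2}] ≤ (4/(2π)^{p/2}) · (p/((p−1)(2−p))) · min(u^{p−1}·v, u·v^{p−1}). -/

import Mathlib

/-!
By the layer cake formula, `E[τ^(p/2)] ≤ (p/2) ∫₀^∞ P[τ > t] t^(p/2-1) dt`; no measurability of
`τ` is needed, because the lower Lebesgue integral is attained by a measurable minorant. The tail is
bounded by `4v(2πt)^(-1/2)` for `t ≤ u²/(2π)` and by `4uv(2πt)^(-1)` beyond. The first power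
integral converges at `0` because `p > 1`, the second at `∞` because `p < 2`, and both contribute
a multiple of `u^(p-1) v`. Exchanging `u` and `v` gives the other term of the minimum.
-/

open MeasureTheory Real Set

theorem lintegral_ofReal_rpow_le_lintegral_meas_lt_mul {α : Type*} [MeasurableSpace α]
    (μ : Measure α) {f : α → ℝ} (hf : 0 ≤ f) {q : ℝ} (hq : 0 < q) :
    ∫⁻ ω, ENNReal.ofReal (f ω ^ q) ∂μ ≤
      ENNReal.ofReal q * ∫⁻ t in Ioi 0, μ {ω | t < f ω} * ENNReal.ofReal (t ^ (q - 1)) := by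
  obtain ⟨g, hg_meas, hg_le, hg_eq⟩ :=
    exists_measurable_le_lintegral_eq μ fun ω ↦ ENNReal.ofReal (f ω ^ q)
  set h : α → ℝ := fun ω ↦ (g ω).toReal ^ q⁻¹
  have h_nonneg : 0 ≤ h := fun ω ↦ by positivity
  have hg_ne_top : ∀ ω, g ω ≠ ⊤ := fun ω ↦
    ne_top_of_le_ne_top ENNReal.ofReal_ne_top (hg_le ω)
  have hg_eq_h : ∀ ω, g ω = ENNReal.ofReal (h ω ^ q) := fun ω ↦ by
    rw [← rpow_mul ENNReal.toReal_nonneg, inv_mul_cancel₀ hq.ne', Real.rpow_one,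
      ENNReal.ofReal_toReal (hg_ne_top ω)]
  have h_le : h ≤ f := fun ω ↦ by
    have : (g ω).toReal ≤ f ω ^ q := by
      simpa [ENNReal.toReal_ofReal (rpow_nonneg (hf ω) q)] using
        ENNReal.toReal_mono ENNReal.ofReal_ne_top (hg_le ω)
    calc h ω ≤ (f ω ^ q) ^ q⁻¹ := rpow_le_rpow ENNReal.toReal_nonneg this (by positivity)
      _ = f ω := by rw [← rpow_mul (hf ω), mul_inv_cancel₀ hq.ne', Real.rpow_one]
  rw [hg_eq, lintegral_congr hg_eq_h, lintegral_rpow_eq_lintegral_meas_lt_mul μ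
    (ae_of_all _ h_nonneg) (by fun_prop) hq]
  gcongr with t
  exact h_le _

theorem setLIntegral_Ioc_zero_ofReal_mul_rpow {c a r : ℝ} (hc : 0 ≤ c) (ha : 0 ≤ a)
    (hr : -1 < r) :
    ∫⁻ t in Ioc 0 a, ENNReal.ofReal (c * t ^ r) =
      ENNReal.ofReal (c * (a ^ (r + 1) / (r + 1))) := by
  have h_int : IntegrableOn (fun t : ℝ ↦ c * t ^ r) (Ioc 0 a) :=
    (intervalIntegrable_iff_integrableOn_Ioc_of_le ha).mp
      ((intervalIntegral.intervalIntegrable_rpow' hr).const_mul c)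
  rw [← ofReal_integral_eq_lintegral_ofReal h_int, integral_const_mul,
    ← intervalIntegral.integral_of_le ha, integral_rpow (Or.inl hr), zero_rpow (by linarith),
    sub_zero]
  filter_upwards [self_mem_ae_restrict measurableSet_Ioc] with t ht
  have := ht.1
  positivity

theorem setLIntegral_Ioi_ofReal_mul_rpow {c a r : ℝ} (hc : 0 ≤ c) (ha : 0 < a) (hr : r < -1) :
    ∫⁻ t in Ioi a, ENNReal.ofReal (c * t ^ r) =
      ENNReal.ofReal (c * (-a ^ (r + 1) / (r + 1))) := by
  rw [← ofReal_integral_eq_lintegral_ofReal ((integrableOn_Ioi_rpow_of_lt hr ha).const_mul c),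
    integral_const_mul, integral_Ioi_rpow_of_lt hr ha]
  filter_upwards [self_mem_ae_restrict measurableSet_Ioi] with t ht
  have := ha.trans ht
  positivity

theorem mul_ofReal_rpow_le_of_le_ofReal_mul_rpow {m : ENNReal} {c t r r' : ℝ} (hc : 0 ≤ c)
    (ht : 0 < t) (hm : m ≤ ENNReal.ofReal (c * t ^ r)) :
    m * ENNReal.ofReal (t ^ r') ≤ ENNReal.ofReal (c * t ^ (r + r')) := by
  calc m * ENNReal.ofReal (t ^ r') ≤ ENNReal.ofReal (c * t ^ r) * ENNReal.ofReal (t ^ r') := by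
        gcongr
    _ = ENNReal.ofReal (c * t ^ (r + r')) := by
        rw [← ENNReal.ofReal_mul (by positivity), rpow_add ht, mul_assoc]

theorem lintegral_rpow_half_le_of_meas_lt_le {α : Type*} [MeasurableSpace α] (μ : Measure α)
    {f : α → ℝ} (hf : 0 ≤ f) {A s : ℝ} (hA : 0 ≤ A) (hs : 0 < s)
    (h_small : ∀ t, 0 < t → μ {ω | t < f ω} ≤ ENNReal.ofReal (A * t ^ (-(1 : ℝ) / 2)))
    (h_large : ∀ t, 0 < t → μ {ω | t < f ω} ≤ ENNReal.ofReal (A * s * t ^ (-(1 : ℝ))))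
    {p : ℝ} (hp1 : 1 < p) (hp2 : p < 2) :
    ∫⁻ ω, ENNReal.ofReal (f ω ^ (p / 2)) ∂μ ≤
      ENNReal.ofReal (p / ((p - 1) * (2 - p)) * A * s ^ (p - 1)) := by
  have hs2 : 0 < s ^ 2 := by positivity
  have h_sq_rpow (r : ℝ) : (s ^ 2) ^ r = s ^ (2 * r) := by
    rw [← rpow_natCast, ← rpow_mul hs.le, Nat.cast_ofNat]
  -- `s ^ 2` is where the two tail bounds cross.
  set g : ℝ → ENNReal := fun t ↦ μ {ω | t < f ω} * ENNReal.ofReal (t ^ (p / 2 - 1))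
  calc ∫⁻ ω, ENNReal.ofReal (f ω ^ (p / 2)) ∂μ
      ≤ ENNReal.ofReal (p / 2) * ∫⁻ t in Ioi 0, g t :=
        lintegral_ofReal_rpow_le_lintegral_meas_lt_mul μ hf (by linarith)
    _ = ENNReal.ofReal (p / 2) *
          ((∫⁻ t in Ioc 0 (s ^ 2), g t) + ∫⁻ t in Ioi (s ^ 2), g t) := by
        rw [← Ioc_union_Ioi_eq_Ioi hs2.le,
          lintegral_union measurableSet_Ioi Ioc_disjoint_Ioi_same]
    _ ≤ ENNReal.ofReal (p / 2) *
          ((∫⁻ t in Ioc 0 (s ^ 2), ENNReal.ofReal (A * t ^ ((p - 3) / 2)))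
          + ∫⁻ t in Ioi (s ^ 2), ENNReal.ofReal (A * s * t ^ (p / 2 - 2))) := by
        gcongr _ * (?_ + ?_)
        · refine setLIntegral_mono' measurableSet_Ioc fun t ht ↦ ?_
          convert mul_ofReal_rpow_le_of_le_ofReal_mul_rpow hA ht.1 (h_small t ht.1) using 4
          ring
        · refine setLIntegral_mono' measurableSet_Ioi fun t ht ↦ ?_
          have ht0 : 0 < t := hs2.trans ht
          convert mul_ofReal_rpow_le_of_le_ofReal_mul_rpow (by positivity) ht0 (h_large t ht0)
            using 4
          ring
    _ = ENNReal.ofReal (p / 2 * (A * (s ^ (p - 1) / ((p - 1) / 2))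
          + A * s * (-s ^ (p - 2) / (p / 2 - 1)))) := by
        rw [setLIntegral_Ioc_zero_ofReal_mul_rpow hA hs2.le (by linarith),
          setLIntegral_Ioi_ofReal_mul_rpow (by positivity) hs2 (by linarith), h_sq_rpow, h_sq_rpow,
          ← ENNReal.ofReal_add (mul_nonneg hA (div_nonneg (by positivity) (by linarith))),
          ← ENNReal.ofReal_mul (by linarith)]
        · congr 4 <;> ring_nf
        · exact mul_nonneg (by positivity)
            (div_nonneg_of_nonpos (neg_nonpos.2 (by positivity)) (by linarith))
    _ = ENNReal.ofReal (p / ((p - 1) * (2 - p)) * A * s ^ (p - 1)) := by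
        have hs_rpow : s * s ^ (p - 2) = s ^ (p - 1) := by
          rw [← rpow_one_add' hs.le (by linarith)]; ring_nf
        have hp1_ne : p - 1 ≠ 0 := by linarith
        have hp2_ne : p - 2 ≠ 0 := by linarith
        have hp2_ne' : 2 - p ≠ 0 := by linarith
        rw [← hs_rpow]
        congr 1
        field_simp
        ring

noncomputable def quadrantExitTailBound (u v t : ℝ) : ℝ :=
  4 * min 1 (u * (2 * π * t) ^ (-(1 : ℝ) / 2)) * min 1 (v * (2 * π * t) ^ (-(1 : ℝ) / 2))

theorem quadrantExitTailBound_comm (u v t : ℝ) :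
    quadrantExitTailBound u v t = quadrantExitTailBound v u t :=
  mul_right_comm _ _ _

section quadrantExitTailBound

variable {u v t : ℝ}

theorem quadrantExitTailBound_le_of_small (hv : 0 ≤ v) (ht : 0 < t) :
    quadrantExitTailBound u v t ≤ 4 * v * (2 * π) ^ (-(1 : ℝ) / 2) * t ^ (-(1 : ℝ) / 2) := by
  have hv' : 0 ≤ min 1 (v * (2 * π * t) ^ (-(1 : ℝ) / 2)) := le_min zero_le_one (by positivity)
  calc quadrantExitTailBound u v t ≤ 4 * 1 * (v * (2 * π * t) ^ (-(1 : ℝ) / 2)) := by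
        unfold quadrantExitTailBound
        gcongr
        exacts [min_le_left _ _, min_le_right _ _]
    _ = _ := by rw [mul_rpow (by positivity : (0 : ℝ) ≤ 2 * π) ht.le]; ring

theorem quadrantExitTailBound_le_of_large (hu : 0 ≤ u) (hv : 0 ≤ v) (ht : 0 < t) :
    quadrantExitTailBound u v t ≤
      4 * v * (2 * π) ^ (-(1 : ℝ) / 2) * (u * (2 * π) ^ (-(1 : ℝ) / 2)) *
        t ^ (-(1 : ℝ)) := by
  have hv' : 0 ≤ min 1 (v * (2 * π * t) ^ (-(1 : ℝ) / 2)) := le_min zero_le_one (by positivity)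
  have ht_rpow : t ^ (-(1 : ℝ) / 2) * t ^ (-(1 : ℝ) / 2) = t ^ (-(1 : ℝ)) := by
    rw [← rpow_add ht]; norm_num
  calc quadrantExitTailBound u v t ≤
        4 * (u * (2 * π * t) ^ (-(1 : ℝ) / 2)) * (v * (2 * π * t) ^ (-(1 : ℝ) / 2)) := by
        unfold quadrantExitTailBound
        gcongr <;> exact min_le_right _ _
    _ = _ := by rw [mul_rpow (by positivity : (0 : ℝ) ≤ 2 * π) ht.le, ← ht_rpow]; ring

end quadrantExitTailBound

theorem lintegral_rpow_half_le_of_meas_lt_le_quadrantExitTailBound {α : Type*}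
    [MeasurableSpace α] (μ : Measure α) {f : α → ℝ} (hf : 0 ≤ f) {u v : ℝ} (hu : 0 < u)
    (hv : 0 ≤ v)
    (h_tail : ∀ t, 0 < t → μ {ω | t < f ω} ≤ ENNReal.ofReal (quadrantExitTailBound u v t))
    {p : ℝ} (hp1 : 1 < p) (hp2 : p < 2) :
    ∫⁻ ω, ENNReal.ofReal (f ω ^ (p / 2)) ∂μ ≤
      ENNReal.ofReal (4 / (2 * π) ^ (p / 2) * (p / ((p - 1) * (2 - p))) * (u ^ (p - 1) * v)) := by
  set c : ℝ := (2 * π) ^ (-(1 : ℝ) / 2)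
  have hc : 0 < c := by positivity
  have hc_rpow : c * c ^ (p - 1) = ((2 * π) ^ (p / 2))⁻¹ := by
    rw [← rpow_one_add' hc.le (by linarith), ← rpow_mul (by positivity),
      ← rpow_neg (by positivity)]
    ring_nf
  convert lintegral_rpow_half_le_of_meas_lt_le μ hf (A := 4 * v * c) (s := u * c) (by positivity)
    (by positivity)
    (fun t ht ↦ (h_tail t ht).trans (ENNReal.ofReal_le_ofReal
      (quadrantExitTailBound_le_of_small hv ht)))
    (fun t ht ↦ (h_tail t ht).trans (ENNReal.ofReal_le_ofReal
      (quadrantExitTailBound_le_of_large hu.le hv ht))) hp1 hp2 using 2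
  rw [mul_rpow hu.le hc.le, div_eq_mul_inv 4, ← hc_rpow]
  ring

theorem exit_time_moment_bound_refined {Ω : Type*} [MeasurableSpace Ω] (P : Measure Ω)
    (τ : Ω → ℝ) (hτ : ∀ ω, 0 ≤ τ ω) (u v : ℝ)
    (hu : 0 < u) (hv : 0 < v)
    (htail : ∀ t : ℝ, 0 < t →
      P {ω | t < τ ω}
        ≤ ENNReal.ofReal
            (4 * min 1 (u * (2 * π * t) ^ (-(1 : ℝ) / 2))
              * min 1 (v * (2 * π * t) ^ (-(1 : ℝ) / 2))))
    (p : ℝ) (hp1 : 1 < p) (hp2 : p < 2) :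
    (∫⁻ ω, ENNReal.ofReal (τ ω ^ (p / 2)) ∂P)
      ≤ ENNReal.ofReal
          ((4 / (2 * π) ^ (p / 2)) * (p / ((p - 1) * (2 - p)))
            * min (u ^ (p - 1) * v) (u * v ^ (p - 1))) := by
  have hC : 0 ≤ 4 / (2 * π) ^ (p / 2) * (p / ((p - 1) * (2 - p))) := by
    have : 0 < (p - 1) * (2 - p) := mul_pos (by linarith) (by linarith)
    positivity
  have htail' (t : ℝ) (ht : 0 < t) :
      P {ω | t < τ ω} ≤ ENNReal.ofReal (quadrantExitTailBound v u t) := by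
    rw [← quadrantExitTailBound_comm]; exact htail t ht
  rw [mul_min_of_nonneg _ _ hC, ENNReal.ofReal_min, mul_comm u]
  exact le_min
    (lintegral_rpow_half_le_of_meas_lt_le_quadrantExitTailBound P hτ hu hv.le htail hp1 hp2)
    (lintegral_rpow_half_le_of_meas_lt_le_quadrantExitTailBound P hτ hv hu.le htail' hp1 hp2)
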